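/- arXiv:2205.11035 — 3 statements merged into one kernel-verified Lean document; each statement's English description precedes it below -/
import Mathlib

section
/- Let $d\geq 2$, $\alpha\in(0,2)$. Then for all $t>0$ and $x^1\neq 0$, $\int_0^\infty \frac{t\,|x^1|^{d-1}\,s^{d-2}}{(t^{1/\alpha}+|x^1|(1+s^2)^{1/2})^{d+\alpha}}\,ds \;\approx\; t^{-1/\alpha}\wedge\frac{t}{|x^1|^{1+\alpha}}$, with implicit constants depending only on $d,\alpha$. -/
open MeasureTheory Real Set Filter

/-!
Write `T = t^{1/α}`, `r = |x¹|` and `M = max T r`. Since `max(1, s) ≤ √(1 + s²) ≤ 1 + s`, the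
denominator base `T + r √(1 + s²)` lies between `(M + r s)/2` and `2 (M + r s)`, so the integral is
comparable, up to the factor `2^{d+α}`, to `∫₀^∞ t r^{d-1} s^{d-2} / (M + r s)^{d+α} ds`. The
substitution `u = r s / M` evaluates this as `K · t M^{-1-α}`, where
`K = ∫₀^∞ u^{d-2} / (1 + u)^{d+α} du` (a Beta value) depends only on `d` and `α`, and
`t M^{-1-α} = min (t^{-1/α}) (t / r^{1+α})`.
-/

lemma integrableOn_Ioi_pow_div_one_add_rpow {n : ℕ} {q : ℝ} (hq : (n : ℝ) + 1 < q) :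
    IntegrableOn (fun u : ℝ => u ^ n / (1 + u) ^ q) (Ioi 0) := by
  have hdom : Integrable (fun u : ℝ => (1 + ‖u‖) ^ (-(q - n))) :=
    integrable_one_add_norm (by simp; linarith)
  refine hdom.integrableOn.mono' (Measurable.aestronglyMeasurable (by fun_prop)) ?_
  filter_upwards [ae_restrict_mem measurableSet_Ioi] with u (hu : 0 < u)
  rw [norm_of_nonneg (by positivity), norm_of_nonneg hu.le, neg_sub, rpow_sub (by positivity),
    rpow_natCast]
  gcongr
  linarith

noncomputable def betaIntegralIoi (n : ℕ) (q : ℝ) : ℝ := ∫ u in Ioi 0, u ^ n / (1 + u) ^ q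

lemma betaIntegralIoi_pos {n : ℕ} {q : ℝ} (hq : (n : ℝ) + 1 < q) : 0 < betaIntegralIoi n q := by
  rw [betaIntegralIoi, setIntegral_pos_iff_support_of_nonneg_ae _
    (integrableOn_Ioi_pow_div_one_add_rpow hq)]
  · have : Function.support (fun u : ℝ => u ^ n / (1 + u) ^ q) ∩ Ioi 0 = Ioi 0 :=
      inter_eq_right.mpr fun u (hu : 0 < u) => by simp only [Function.mem_support]; positivity
    rw [this]; simp
  · filter_upwards [ae_restrict_mem measurableSet_Ioi] with u (hu : 0 < u)
    positivity

lemma pow_div_add_mul_rpow_eq {n : ℕ} {q A B s : ℝ} (hA : 0 < A) (hB : 0 < B) (hs : 0 ≤ s) :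
    s ^ n / (A + B * s) ^ q
      = (A ^ q * (B / A) ^ n)⁻¹ * ((B / A * s) ^ n / (1 + B / A * s) ^ q) := by
  have hAB : A + B * s = A * (1 + B / A * s) := by field_simp
  rw [hAB, mul_rpow hA.le (by positivity)]
  field_simp
  ring

lemma integrableOn_Ioi_pow_div_add_mul_rpow {n : ℕ} {q A B : ℝ} (hq : (n : ℝ) + 1 < q)
    (hA : 0 < A) (hB : 0 < B) :
    IntegrableOn (fun s : ℝ => s ^ n / (A + B * s) ^ q) (Ioi 0) := by
  refine IntegrableOn.congr_fun (Integrable.const_mul ?_ _)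
    (fun s hs => (pow_div_add_mul_rpow_eq hA hB (le_of_lt hs)).symm) measurableSet_Ioi
  refine (integrableOn_Ioi_comp_mul_left_iff (fun u => u ^ n / (1 + u) ^ q) 0
    (div_pos hB hA)).mpr ?_
  simpa using integrableOn_Ioi_pow_div_one_add_rpow hq

lemma integral_Ioi_pow_div_add_mul_rpow {n : ℕ} (q : ℝ) {A B : ℝ} (hA : 0 < A) (hB : 0 < B) :
    ∫ s in Ioi 0, s ^ n / (A + B * s) ^ q
      = betaIntegralIoi n q * A ^ ((n : ℝ) + 1 - q) / B ^ (n + 1) := by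
  rw [setIntegral_congr_fun measurableSet_Ioi
      (fun s hs => pow_div_add_mul_rpow_eq hA hB (le_of_lt hs)),
    integral_const_mul, integral_comp_mul_left_Ioi (fun u => u ^ n / (1 + u) ^ q) 0 (div_pos hB hA),
    mul_zero, smul_eq_mul, ← betaIntegralIoi, rpow_sub hA, rpow_add hA, rpow_natCast, rpow_one,
    div_pow]
  field_simp
  ring

lemma max_add_mul_le_two_mul_add_mul_sqrt {T r s : ℝ} (hT : 0 ≤ T) (hr : 0 ≤ r) :
    max T r + r * s ≤ 2 * (T + r * √(1 + s ^ 2)) := by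
  have h1 : 1 ≤ √(1 + s ^ 2) := one_le_sqrt.mpr (by nlinarith)
  have h2 : s ≤ √(1 + s ^ 2) := le_sqrt_of_sq_le (by linarith)
  have : max T r ≤ T + r * √(1 + s ^ 2) := max_le (by nlinarith) (by nlinarith)
  nlinarith

lemma add_mul_sqrt_le_two_mul_max_add_mul {T r s : ℝ} (hr : 0 ≤ r) (hs : 0 ≤ s) :
    T + r * √(1 + s ^ 2) ≤ 2 * (max T r + r * s) := by
  have : √(1 + s ^ 2) ≤ 1 + s := sqrt_le_iff.mpr ⟨by linarith, by nlinarith⟩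
  nlinarith [le_max_left T r, le_max_right T r]

lemma div_rpow_le_two_rpow_mul_div_rpow {N a b q : ℝ} (hN : 0 ≤ N) (ha : 0 < a) (hq : 0 ≤ q)
    (hab : a ≤ 2 * b) : N / b ^ q ≤ 2 ^ q * (N / a ^ q) := by
  calc N / b ^ q ≤ N / (a / 2) ^ q := by gcongr; linarith
    _ = 2 ^ q * (N / a ^ q) := by
      rw [div_rpow ha.le zero_le_two]
      field_simp

lemma setIntegral_bounds_of_le_mul {X : Type*} [MeasurableSpace X] {μ : Measure X}
    {s : Set X} (hs : MeasurableSet s) {f g : X → ℝ} {c : ℝ} (hg : IntegrableOn g s μ)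
    (hf : AEStronglyMeasurable f (μ.restrict s)) (hf0 : ∀ x ∈ s, 0 ≤ f x)
    (hlo : ∀ x ∈ s, c⁻¹ * g x ≤ f x) (hhi : ∀ x ∈ s, f x ≤ c * g x) :
    c⁻¹ * ∫ x in s, g x ∂μ ≤ ∫ x in s, f x ∂μ ∧ ∫ x in s, f x ∂μ ≤ c * ∫ x in s, g x ∂μ := by
  have hfi : IntegrableOn f s μ := by
    refine (hg.const_mul c).mono' hf ?_
    filter_upwards [ae_restrict_mem hs] with x hx
    rw [norm_of_nonneg (hf0 x hx)]
    exact hhi x hx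
  rw [← integral_const_mul, ← integral_const_mul]
  exact ⟨setIntegral_mono_on (hg.const_mul _) hfi hs hlo,
    setIntegral_mono_on hfi (hg.const_mul _) hs hhi⟩

lemma min_rpow_neg_one_div_div_rpow {t r α : ℝ} (ht : 0 < t) (hr : 0 < r) (hα : 0 < α) :
    min (t ^ (-1 / α)) (t / r ^ (1 + α)) = t * max (t ^ (1 / α)) r ^ (-1 - α) := by
  have hT : t ^ (-1 / α) = t * (t ^ (1 / α)) ^ (-1 - α) := by
    rw [← rpow_mul ht.le]
    nth_rw 2 [← rpow_one t]
    rw [← rpow_add ht]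
    congr 1
    field_simp
    ring
  have hR : t / r ^ (1 + α) = t * r ^ (-1 - α) := by
    rw [show -1 - α = -(1 + α) by ring, rpow_neg hr.le, div_eq_mul_inv]
  rw [hT, hR, ← mul_min_of_nonneg _ _ ht.le]
  congr 1
  exact ((antitoneOn_rpow_Ioi_of_exponent_nonpos (by linarith)).map_max
    (rpow_pos_of_pos ht _) hr).symm

lemma integral_Ioi_pow_div_add_mul_sqrt_bounds {n : ℕ} {q T r : ℝ} (hq : (n : ℝ) + 1 < q)
    (hT : 0 < T) (hr : 0 < r) :
    (2 ^ q)⁻¹ * (betaIntegralIoi n q * max T r ^ ((n : ℝ) + 1 - q) / r ^ (n + 1))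
        ≤ ∫ s in Ioi 0, s ^ n / (T + r * √(1 + s ^ 2)) ^ q ∧
      ∫ s in Ioi 0, s ^ n / (T + r * √(1 + s ^ 2)) ^ q
        ≤ 2 ^ q * (betaIntegralIoi n q * max T r ^ ((n : ℝ) + 1 - q) / r ^ (n + 1)) := by
  have hM : 0 < max T r := lt_max_of_lt_left hT
  have hq0 : 0 ≤ q := by linarith [n.cast_nonneg (α := ℝ)]
  rw [← integral_Ioi_pow_div_add_mul_rpow q hM hr]
  refine setIntegral_bounds_of_le_mul measurableSet_Ioi
    (integrableOn_Ioi_pow_div_add_mul_rpow hq hM hr) (Measurable.aestronglyMeasurable (by fun_prop))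
    (fun s (hs : 0 < s) => by positivity) (fun s (hs : 0 < s) => ?_) (fun s (hs : 0 < s) => ?_)
  · rw [inv_mul_le_iff₀ (by positivity)]
    exact div_rpow_le_two_rpow_mul_div_rpow (by positivity) (by positivity) hq0
      (add_mul_sqrt_le_two_mul_max_add_mul hr.le hs.le)
  · exact div_rpow_le_two_rpow_mul_div_rpow (by positivity) (by positivity) hq0
      (max_add_mul_le_two_mul_add_mul_sqrt hT.le hr.le)

/-- for `d ≥ 2`, `α ∈ (0,2)`, `t > 0`, `x¹ ≠ 0`,
`∫_0^∞ t|x¹|^{d-1} s^{d-2} / (t^{1/α}+|x¹|(1+s²)^{1/2})^{d+α} ds ≈ t^{-1/α} ∧ t/|x¹|^{1+α}`,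
with implicit constants depending only on `d, α`. -/
theorem stmt2 (d : ℕ) (hd : 2 ≤ d) (α : ℝ) (hα : α ∈ Set.Ioo (0 : ℝ) 2) :
    ∃ C : ℝ, 0 < C ∧
      ∀ t : ℝ, 0 < t → ∀ x1 : ℝ, x1 ≠ 0 →
        C⁻¹ * min (t ^ (-1 / α)) (t / |x1| ^ ((1 : ℝ) + α)) ≤
            (∫ s in Set.Ioi (0 : ℝ),
              t * |x1| ^ (d - 1) * s ^ (d - 2) /
                (t ^ (1 / α) + |x1| * Real.sqrt (1 + s ^ 2)) ^ ((d : ℝ) + α)) ∧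
          (∫ s in Set.Ioi (0 : ℝ),
              t * |x1| ^ (d - 1) * s ^ (d - 2) /
                (t ^ (1 / α) + |x1| * Real.sqrt (1 + s ^ 2)) ^ ((d : ℝ) + α)) ≤
            C * min (t ^ (-1 / α)) (t / |x1| ^ ((1 : ℝ) + α)) := by
  obtain ⟨hα0, -⟩ := hα
  obtain ⟨n, rfl⟩ := Nat.exists_eq_add_of_le' hd
  set q : ℝ := ((n + 2 : ℕ) : ℝ) + α
  have hq : (n : ℝ) + 1 < q := by push_cast [q]; linarith
  set K := betaIntegralIoi n q
  have hK : 0 < K := betaIntegralIoi_pos hq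
  refine ⟨2 ^ q * max K K⁻¹, by positivity, fun t ht x1 hx => ?_⟩
  have hr : 0 < |x1| := abs_pos.mpr hx
  obtain ⟨hlo, hhi⟩ := integral_Ioi_pow_div_add_mul_sqrt_bounds hq (rpow_pos_of_pos ht (1 / α)) hr
  have hI : ∫ s in Ioi 0, t * |x1| ^ (n + 2 - 1) * s ^ (n + 2 - 2) /
        (t ^ (1 / α) + |x1| * √(1 + s ^ 2)) ^ q
      = t * |x1| ^ (n + 1) * ∫ s in Ioi 0, s ^ n / (t ^ (1 / α) + |x1| * √(1 + s ^ 2)) ^ q := by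
    rw [← integral_const_mul]
    simp_rw [mul_div_assoc]
    rfl -- `n + 2 - 1` and `n + 2 - 2` reduce to `n + 1` and `n`
  have hmin : t * |x1| ^ (n + 1) * (K * max (t ^ (1 / α)) |x1| ^ ((n : ℝ) + 1 - q) / |x1| ^ (n + 1))
      = K * min (t ^ (-1 / α)) (t / |x1| ^ ((1 : ℝ) + α)) := by
    rw [min_rpow_neg_one_div_div_rpow ht hr hα0,
      show (n : ℝ) + 1 - q = -1 - α by push_cast [q]; ring]
    field_simp
  set m := min (t ^ (-1 / α)) (t / |x1| ^ ((1 : ℝ) + α))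
  rw [hI]
  constructor
  · calc (2 ^ q * max K K⁻¹)⁻¹ * m ≤ (2 ^ q)⁻¹ * (K * m) := by
          rw [mul_inv, mul_assoc]
          gcongr
          exact inv_le_of_inv_le₀ hK (le_max_right _ _)
      _ ≤ _ := by rw [← hmin, mul_left_comm]; gcongr
  · calc _ ≤ 2 ^ q * (K * m) := by rw [← hmin, mul_left_comm (2 ^ q)]; gcongr
      _ ≤ _ := by rw [mul_assoc]; gcongr; exact le_max_left _ _
end

section
/- Let $\alpha\in(0,2)$ and $\gamma_0,\gamma_1\in\mathbb{R}$ satisfy $-2/\alpha<\gamma_0$ and $-2<\gamma_1-\gamma_0\leq 2+2/\alpha$. Then there exists $C=C(\alpha,\gamma_0,\gamma_1)$ such that for all $x^1\in\mathbb{R}$, $\int_{\mathbb{R}}\Big(1\wedge\frac{1}{|x^1-y^1|^{1+\alpha}}\Big)\frac{|y^1|^{\gamma_0\alpha/2}}{(1+|y^1|^{\alpha/2})^{\gamma_1}}\,dy^1 \leq C\,(1+|x^1|^{\alpha/2})^{\gamma_0-\gamma_1}$. -/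
/-!
Write `β = 1 + α`, `a = γ₀α/2 > -1`, `p = (γ₀ - γ₁)α/2 ∈ [-β, β - 1)` and `M = max 1 |x|`.
Up to constants the weight is `|y|^a` for `|y| ≤ 1` and `|y|^p` for `|y| ≥ 1`, and the right-hand
side is `M^p`. Near the diagonal (`1 < |y|`, `|x - y| ≤ M/2`) the weight is comparable to `M^p`
and the kernel is integrable. Everywhere else `|x - y| ≥ max M |y| / 4`, so the kernel is
`≲ max M |y| ^ (-β)`: over `|y| ≤ M` this gives `M^(-β) · M^(p + β)` (as `p + β ≥ 0`), and over
`|y| > M` it gives `M^(p - β + 1) ≤ M^p` (convergent as `p < β - 1`).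
-/

open MeasureTheory Real Set Filter
open scoped ENNReal

lemma setLIntegral_le_add_of_subset_union {α : Type*} [MeasurableSpace α] {μ : Measure α}
    (f : α → ℝ≥0∞) {s t u : Set α} (h : s ⊆ t ∪ u) :
    ∫⁻ x in s, f x ∂μ ≤ ∫⁻ x in t, f x ∂μ + ∫⁻ x in u, f x ∂μ :=
  (lintegral_mono_set h).trans (lintegral_union_le f t u)

lemma lintegral_comp_abs (g : ℝ → ℝ≥0∞) : ∫⁻ y, g |y| = 2 * ∫⁻ y in Ioi 0, g y := by
  have hpos : ∫⁻ y in Ioi 0, g |y| = ∫⁻ y in Ioi 0, g y :=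
    setLIntegral_congr_fun measurableSet_Ioi fun y hy => by rw [abs_of_pos hy]
  have hneg : ∫⁻ y in Iio 0, g |y| = ∫⁻ y in Ioi 0, g |y| := by
    rw [← lintegral_indicator measurableSet_Iio, ← lintegral_indicator measurableSet_Ioi,
      ← lintegral_neg_eq_self]
    congr 1 with y
    simp only [indicator, mem_Iio, mem_Ioi, neg_lt_zero, abs_neg]
  rw [← lintegral_add_compl _ measurableSet_Iio, compl_Iio, ← restrict_Ioi_eq_restrict_Ici,
    hneg, hpos, two_mul]

lemma setLIntegral_abs_preimage (g : ℝ → ℝ≥0∞) {S : Set ℝ} (hS : MeasurableSet S) :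
    ∫⁻ y in abs ⁻¹' S, g |y| = 2 * ∫⁻ y in S ∩ Ioi 0, g y := by
  rw [← lintegral_indicator (measurable_abs hS), ← setLIntegral_indicator hS]
  exact lintegral_comp_abs (S.indicator g)

lemma lintegral_abs_le_rpow {s R : ℝ} (hs : -1 < s) (hR : 0 ≤ R) :
    ∫⁻ y in {y : ℝ | |y| ≤ R}, ENNReal.ofReal (|y| ^ s) =
      ENNReal.ofReal (2 * R ^ (s + 1) / (s + 1)) := by
  have hint : IntegrableOn (fun y : ℝ => y ^ s) (Ioc 0 R) :=
    (intervalIntegrable_iff_integrableOn_Ioc_of_le hR).mp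
      (intervalIntegral.intervalIntegrable_rpow' hs)
  have hnonneg : 0 ≤ᵐ[volume.restrict (Ioc 0 R)] fun y : ℝ => y ^ s :=
    (ae_restrict_iff' measurableSet_Ioc).mpr (ae_of_all _ fun y hy => rpow_nonneg hy.1.le s)
  rw [show {y : ℝ | |y| ≤ R} = abs ⁻¹' Iic R from rfl,
    setLIntegral_abs_preimage (fun t => ENNReal.ofReal (t ^ s)) measurableSet_Iic,
    Iic_inter_Ioi, ← ofReal_integral_eq_lintegral_ofReal hint hnonneg,
    ← intervalIntegral.integral_of_le hR, integral_rpow (Or.inl hs), zero_rpow (by linarith),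
    ← ENNReal.ofReal_ofNat 2, ← ENNReal.ofReal_mul zero_le_two]
  ring_nf

lemma lintegral_lt_abs_rpow {s R : ℝ} (hs : s < -1) (hR : 0 < R) :
    ∫⁻ y in {y : ℝ | R < |y|}, ENNReal.ofReal (|y| ^ s) =
      ENNReal.ofReal (2 * R ^ (s + 1) / (-1 - s)) := by
  have hnonneg : 0 ≤ᵐ[volume.restrict (Ioi R)] fun y : ℝ => y ^ s :=
    (ae_restrict_iff' measurableSet_Ioi).mpr
      (ae_of_all _ fun y hy => rpow_nonneg (hR.trans hy).le s)
  rw [show {y : ℝ | R < |y|} = abs ⁻¹' Ioi R from rfl,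
    setLIntegral_abs_preimage (fun t => ENNReal.ofReal (t ^ s)) measurableSet_Ioi,
    Ioi_inter_Ioi, sup_of_le_left hR.le,
    ← ofReal_integral_eq_lintegral_ofReal (integrableOn_Ioi_rpow_of_lt hs hR) hnonneg,
    integral_Ioi_rpow_of_lt hs hR, ← ENNReal.ofReal_ofNat 2, ← ENNReal.ofReal_mul zero_le_two]
  congr 1
  rw [neg_div, ← div_neg]
  ring

lemma rpow_le_two_rpow_abs_mul {u v : ℝ} (γ : ℝ) (hu : 0 < u) (huv : u ≤ 2 * v)
    (hvu : v ≤ 2 * u) : u ^ γ ≤ 2 ^ |γ| * v ^ γ := by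
  have hv : 0 < v := by linarith
  rcases le_total 0 γ with hγ | hγ
  · calc u ^ γ ≤ (2 * v) ^ γ := rpow_le_rpow hu.le huv hγ
      _ = 2 ^ |γ| * v ^ γ := by rw [abs_of_nonneg hγ, mul_rpow zero_le_two hv.le]
  · calc u ^ γ ≤ (v / 2) ^ γ := rpow_le_rpow_of_nonpos (by positivity) (by linarith) hγ
      _ = 2 ^ |γ| * v ^ γ := by
        rw [abs_of_nonpos hγ, div_rpow hv.le zero_le_two, rpow_neg zero_le_two, div_eq_inv_mul]

lemma max_one_rpow_mul {t b : ℝ} (ht : 0 ≤ t) (hb : 0 ≤ b) (c : ℝ) :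
    max 1 t ^ (b * c) = max 1 (t ^ b) ^ c := by
  rw [rpow_mul (zero_le_one.trans (le_max_left 1 t))]
  rcases le_total t 1 with h | h
  · rw [max_eq_left h, max_eq_left (rpow_le_one ht h hb), one_rpow]
  · rw [max_eq_right h, max_eq_right (one_le_rpow h hb)]

lemma one_add_rpow_le_max_one_rpow {t : ℝ} (ht : 0 ≤ t) (γ : ℝ) :
    (1 + t) ^ γ ≤ 2 ^ |γ| * max 1 t ^ γ :=
  rpow_le_two_rpow_abs_mul γ (by positivity) (by linarith [le_max_left 1 t, le_max_right 1 t])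
    (by linarith [max_le (by linarith : (1 : ℝ) ≤ 1 + t) (by linarith : t ≤ 1 + t)])

lemma max_one_rpow_le_one_add_rpow {t : ℝ} (ht : 0 ≤ t) (γ : ℝ) :
    max 1 t ^ γ ≤ 2 ^ |γ| * (1 + t) ^ γ :=
  rpow_le_two_rpow_abs_mul γ (zero_lt_one.trans_le (le_max_left 1 t))
    (by linarith [max_le (by linarith : (1 : ℝ) ≤ 1 + t) (by linarith : t ≤ 1 + t)])
    (by linarith [le_max_left 1 t, le_max_right 1 t])

lemma exists_pos_mul_ofReal_le {C : ℝ≥0∞} (hC : C ≠ ∞) :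
    ∃ c : ℝ, 0 < c ∧ ∀ t, C * ENNReal.ofReal t ≤ ENNReal.ofReal (c * t) := by
  refine ⟨C.toReal + 1, by positivity, fun t => ?_⟩
  rw [ENNReal.ofReal_mul (by positivity)]
  gcongr
  exact (ENNReal.le_ofReal_iff_toReal_le hC (by positivity)).mpr (by linarith)

/-- `1 ∧ |z|^(-β)`; for `β = 1 + α` it is comparable to the stable density `p₁(1, z)`. -/
noncomputable def truncatedKernel (β z : ℝ) : ℝ := min 1 (1 / |z| ^ β)

@[fun_prop]
lemma measurable_truncatedKernel (β : ℝ) : Measurable (truncatedKernel β) := by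
  unfold truncatedKernel
  fun_prop

lemma truncatedKernel_nonneg (β z : ℝ) : 0 ≤ truncatedKernel β z :=
  le_min zero_le_one (by positivity)

lemma truncatedKernel_le_rpow_neg {β r z : ℝ} (hβ : 0 ≤ β) (hr : 0 < r) (h : r ≤ max 1 |z|) :
    truncatedKernel β z ≤ r ^ (-β) := by
  rcases le_max_iff.mp h with h | h
  · exact (min_le_left _ _).trans (one_le_rpow_of_pos_of_le_one_of_nonpos hr h (by linarith))
  · calc truncatedKernel β z ≤ 1 / |z| ^ β := min_le_right _ _
      _ ≤ 1 / r ^ β := by gcongr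
      _ = r ^ (-β) := by rw [rpow_neg hr.le, one_div]

lemma lintegral_truncatedKernel_ne_top {β : ℝ} (hβ : 1 < β) :
    ∫⁻ z, ENNReal.ofReal (truncatedKernel β z) ≠ ∞ := by
  have hnear : ∫⁻ z in {z : ℝ | |z| ≤ 1}, ENNReal.ofReal (truncatedKernel β z) ≠ ∞ := by
    refine ne_top_of_le_ne_top (ENNReal.ofReal_ne_top (r := 2 * 1 ^ ((0 : ℝ) + 1) / (0 + 1))) ?_
    rw [← lintegral_abs_le_rpow (by norm_num) zero_le_one]
    refine setLIntegral_mono (by fun_prop) fun z _ => ?_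
    rw [rpow_zero]
    exact ENNReal.ofReal_le_ofReal (min_le_left _ _)
  have hfar : ∫⁻ z in {z : ℝ | 1 < |z|}, ENNReal.ofReal (truncatedKernel β z) ≠ ∞ := by
    refine ne_top_of_le_ne_top (ENNReal.ofReal_ne_top (r := 2 * 1 ^ (-β + 1) / (-1 - -β))) ?_
    rw [← lintegral_lt_abs_rpow (by linarith) one_pos]
    exact setLIntegral_mono (by fun_prop) fun z hz => ENNReal.ofReal_le_ofReal
      (truncatedKernel_le_rpow_neg (by linarith) (zero_lt_one.trans hz) (le_max_right _ _))
  rw [← setLIntegral_univ]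
  exact ne_top_of_le_ne_top (ENNReal.add_ne_top.mpr ⟨hnear, hfar⟩)
    (setLIntegral_le_add_of_subset_union _ fun z _ => le_or_gt |z| 1)

lemma near_diagonal_or_max_le_four_mul (x y : ℝ) :
    (1 < |y| ∧ |x - y| ≤ max 1 |x| / 2) ∨ max (max 1 |x|) |y| ≤ 4 * max 1 |x - y| := by
  refine or_iff_not_imp_left.mpr fun hnear => ?_
  have hx := abs_sub_abs_le_abs_sub x y
  have hy := abs_sub_abs_le_abs_sub y x
  rw [abs_sub_comm y x] at hy
  have hM := le_max_right 1 |x|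
  have hm₁ := le_max_left 1 |x - y|
  have hm₂ := le_max_right 1 |x - y|
  by_cases h : 1 < |y|
  · have : max 1 |x| / 2 < |x - y| := lt_of_not_ge fun h' => hnear ⟨h, h'⟩
    refine max_le (max_le ?_ ?_) ?_ <;> linarith
  · refine max_le (max_le ?_ ?_) ?_ <;> linarith

lemma abs_le_two_mul_and_le_two_mul_abs_of_near {x y : ℝ} (hy : 1 < |y|)
    (h : |x - y| ≤ max 1 |x| / 2) : |y| ≤ 2 * max 1 |x| ∧ max 1 |x| ≤ 2 * |y| := by
  have hx := abs_sub_abs_le_abs_sub x y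
  have hy' := abs_sub_abs_le_abs_sub y x
  rw [abs_sub_comm y x] at hy'
  rcases le_total 1 |x| with h1 | h1
  · rw [max_eq_right h1] at *
    constructor <;> linarith
  · rw [max_eq_left h1] at *
    constructor <;> linarith

noncomputable def powerWeight (a p y : ℝ) : ℝ := |y| ^ a * max 1 |y| ^ (p - a)

@[fun_prop]
lemma measurable_powerWeight (a p : ℝ) : Measurable (powerWeight a p) := by
  unfold powerWeight
  fun_prop

lemma powerWeight_nonneg (a p y : ℝ) : 0 ≤ powerWeight a p y := by
  unfold powerWeight
  have := le_max_left 1 |y|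
  positivity

lemma powerWeight_of_abs_le_one {a p y : ℝ} (h : |y| ≤ 1) : powerWeight a p y = |y| ^ a := by
  rw [powerWeight, max_eq_left h, one_rpow, mul_one]

lemma powerWeight_of_one_le_abs {a p y : ℝ} (h : 1 ≤ |y|) : powerWeight a p y = |y| ^ p := by
  rw [powerWeight, max_eq_right h, ← rpow_add (zero_lt_one.trans_le h), add_sub_cancel]

lemma rpow_div_one_add_rpow_le_powerWeight {b : ℝ} (hb : 0 ≤ b) (a γ y : ℝ) :
    |y| ^ a / (1 + |y| ^ b) ^ γ ≤ 2 ^ |γ| * powerWeight a (a - γ * b) y := by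
  have hcomp := one_add_rpow_le_max_one_rpow (rpow_nonneg (abs_nonneg y) b) (-γ)
  rw [abs_neg] at hcomp
  rw [powerWeight, show a - γ * b - a = b * -γ by ring, max_one_rpow_mul (abs_nonneg y) hb,
    div_eq_mul_inv, ← rpow_neg (by positivity)]
  calc |y| ^ a * (1 + |y| ^ b) ^ (-γ) ≤ |y| ^ a * (2 ^ |γ| * max 1 (|y| ^ b) ^ (-γ)) := by
        gcongr
    _ = 2 ^ |γ| * (|y| ^ a * max 1 (|y| ^ b) ^ (-γ)) := by ring

lemma exists_setLIntegral_rpow_le {β p : ℝ} (hβ : 1 < β) (hp : -β ≤ p) :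
    ∃ C ≠ ∞, ∀ M, 1 ≤ M → ∫⁻ y in {y : ℝ | 1 < |y| ∧ |y| ≤ M}, ENNReal.ofReal (|y| ^ p) ≤
      C * ENNReal.ofReal (M ^ (p + β)) := by
  rcases lt_or_ge p (-1) with hp₁ | hp₁
  · refine ⟨ENNReal.ofReal (2 / (-1 - p)), ENNReal.ofReal_ne_top, fun M hM => ?_⟩
    calc ∫⁻ y in {y : ℝ | 1 < |y| ∧ |y| ≤ M}, ENNReal.ofReal (|y| ^ p)
        ≤ ∫⁻ y in {y : ℝ | 1 < |y|}, ENNReal.ofReal (|y| ^ p) := lintegral_mono_set fun y hy => hy.1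
      _ = ENNReal.ofReal (2 / (-1 - p)) := by
        rw [lintegral_lt_abs_rpow hp₁ one_pos, one_rpow, mul_one]
      _ ≤ ENNReal.ofReal (2 / (-1 - p)) * ENNReal.ofReal (M ^ (p + β)) :=
        le_mul_of_one_le_right' (ENNReal.one_le_ofReal.mpr (one_le_rpow hM (by linarith)))
  · -- any exponent `s ∈ [p, p + β - 1]` with `s > -1` works; this avoids the logarithm at `p = -1`
    set s := p + (β - 1) / 2 with hs
    have hs₁ : 0 < s + 1 := by linarith
    refine ⟨ENNReal.ofReal (2 / (s + 1)), ENNReal.ofReal_ne_top, fun M hM => ?_⟩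
    calc ∫⁻ y in {y : ℝ | 1 < |y| ∧ |y| ≤ M}, ENNReal.ofReal (|y| ^ p)
        ≤ ∫⁻ y in {y : ℝ | 1 < |y| ∧ |y| ≤ M}, ENNReal.ofReal (|y| ^ s) :=
          setLIntegral_mono (by fun_prop) fun y hy =>
            ENNReal.ofReal_le_ofReal (rpow_le_rpow_of_exponent_le hy.1.le (by linarith))
      _ ≤ ∫⁻ y in {y : ℝ | |y| ≤ M}, ENNReal.ofReal (|y| ^ s) := lintegral_mono_set fun y hy => hy.2
      _ = ENNReal.ofReal (2 / (s + 1) * M ^ (s + 1)) := by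
          rw [lintegral_abs_le_rpow (by linarith) (by linarith), mul_div_right_comm]
      _ ≤ ENNReal.ofReal (2 / (s + 1)) * ENNReal.ofReal (M ^ (p + β)) := by
          rw [← ENNReal.ofReal_mul (by positivity)]
          exact ENNReal.ofReal_le_ofReal (mul_le_mul_of_nonneg_left
            (rpow_le_rpow_of_exponent_le hM (by linarith)) (by positivity))

lemma exists_setLIntegral_powerWeight_le {β a p : ℝ} (hβ : 1 < β) (ha : -1 < a) (hp : -β ≤ p) :
    ∃ C ≠ ∞, ∀ M, 1 ≤ M → ∫⁻ y in {y : ℝ | |y| ≤ M}, ENNReal.ofReal (powerWeight a p y) ≤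
      C * ENNReal.ofReal (M ^ (p + β)) := by
  obtain ⟨C, hC, hmid⟩ := exists_setLIntegral_rpow_le hβ hp
  refine ⟨ENNReal.ofReal (2 / (a + 1)) + C, by finiteness, fun M hM => ?_⟩
  have hunit : ∫⁻ y in {y : ℝ | |y| ≤ 1}, ENNReal.ofReal (powerWeight a p y) =
      ENNReal.ofReal (2 / (a + 1)) := by
    have h := lintegral_abs_le_rpow ha zero_le_one
    rw [one_rpow, mul_one] at h
    rw [← h]
    exact setLIntegral_congr_fun (measurableSet_le (by fun_prop) (by fun_prop))
      fun y hy => by rw [powerWeight_of_abs_le_one hy]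
  have hannulus : ∫⁻ y in {y : ℝ | 1 < |y| ∧ |y| ≤ M}, ENNReal.ofReal (powerWeight a p y) =
      ∫⁻ y in {y : ℝ | 1 < |y| ∧ |y| ≤ M}, ENNReal.ofReal (|y| ^ p) :=
    setLIntegral_congr_fun (measurableSet_setOfPred.mpr (by fun_prop))
      fun y hy => by rw [powerWeight_of_one_le_abs hy.1.le]
  calc ∫⁻ y in {y : ℝ | |y| ≤ M}, ENNReal.ofReal (powerWeight a p y)
      ≤ (∫⁻ y in {y : ℝ | |y| ≤ 1}, ENNReal.ofReal (powerWeight a p y)) +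
          ∫⁻ y in {y : ℝ | 1 < |y| ∧ |y| ≤ M}, ENNReal.ofReal (powerWeight a p y) :=
        setLIntegral_le_add_of_subset_union _ fun y hy => by
          rcases le_or_gt |y| 1 with h | h
          exacts [Or.inl h, Or.inr ⟨h, hy⟩]
    _ ≤ ENNReal.ofReal (2 / (a + 1)) * ENNReal.ofReal (M ^ (p + β)) +
          C * ENNReal.ofReal (M ^ (p + β)) := by
        rw [hunit, hannulus]
        gcongr
        · exact le_mul_of_one_le_right' (ENNReal.one_le_ofReal.mpr (one_le_rpow hM (by linarith)))
        · exact hmid M hM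
    _ = (ENNReal.ofReal (2 / (a + 1)) + C) * ENNReal.ofReal (M ^ (p + β)) := (add_mul _ _ _).symm

lemma exists_lintegral_max_rpow_neg_mul_powerWeight_le {β a p : ℝ} (hβ : 1 < β) (ha : -1 < a)
    (hp : -β ≤ p) (hp' : p < β - 1) :
    ∃ C ≠ ∞, ∀ M, 1 ≤ M → ∫⁻ y, ENNReal.ofReal (max M |y| ^ (-β) * powerWeight a p y) ≤
      C * ENNReal.ofReal (M ^ p) := by
  obtain ⟨C, hC, hinner⟩ := exists_setLIntegral_powerWeight_le hβ ha hp
  refine ⟨C + ENNReal.ofReal (2 / (β - 1 - p)), by finiteness, fun M hM => ?_⟩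
  have hM₀ : 0 < M := zero_lt_one.trans_le hM
  have hinside : ∫⁻ y in {y : ℝ | |y| ≤ M},
      ENNReal.ofReal (max M |y| ^ (-β) * powerWeight a p y) ≤ C * ENNReal.ofReal (M ^ p) :=
    calc _ = ∫⁻ y in {y : ℝ | |y| ≤ M},
          ENNReal.ofReal (M ^ (-β)) * ENNReal.ofReal (powerWeight a p y) :=
          setLIntegral_congr_fun (measurableSet_le (by fun_prop) (by fun_prop)) fun y hy => by
            rw [max_eq_left hy, ENNReal.ofReal_mul (by positivity)]
      _ ≤ ENNReal.ofReal (M ^ (-β)) * (C * ENNReal.ofReal (M ^ (p + β))) := by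
          rw [lintegral_const_mul' _ _ ENNReal.ofReal_ne_top]
          gcongr
          exact hinner M hM
      _ = C * ENNReal.ofReal (M ^ p) := by
          rw [mul_left_comm, ← ENNReal.ofReal_mul (by positivity), ← rpow_add hM₀,
            neg_add_cancel_comm_assoc]
  have houtside : ∫⁻ y in {y : ℝ | M < |y|},
      ENNReal.ofReal (max M |y| ^ (-β) * powerWeight a p y) ≤
        ENNReal.ofReal (2 / (β - 1 - p)) * ENNReal.ofReal (M ^ p) :=
    calc _ = ∫⁻ y in {y : ℝ | M < |y|}, ENNReal.ofReal (|y| ^ (p - β)) :=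
          setLIntegral_congr_fun (measurableSet_lt (by fun_prop) (by fun_prop)) fun y hy => by
            rw [max_eq_right hy.le, powerWeight_of_one_le_abs (hM.trans hy.le),
              ← rpow_add (hM₀.trans hy), neg_add_eq_sub]
      _ = ENNReal.ofReal (2 / (β - 1 - p) * M ^ (p - β + 1)) := by
          rw [lintegral_lt_abs_rpow (by linarith) hM₀]
          congr 1
          ring
      _ ≤ _ := by
          have : 0 < β - 1 - p := by linarith
          rw [← ENNReal.ofReal_mul (by positivity)]
          exact ENNReal.ofReal_le_ofReal (mul_le_mul_of_nonneg_left
            (rpow_le_rpow_of_exponent_le hM (by linarith)) (by positivity))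
  calc ∫⁻ y, ENNReal.ofReal (max M |y| ^ (-β) * powerWeight a p y)
      = ∫⁻ y in univ, ENNReal.ofReal (max M |y| ^ (-β) * powerWeight a p y) :=
        (setLIntegral_univ _).symm
    _ ≤ _ := setLIntegral_le_add_of_subset_union _ fun y _ => le_or_gt |y| M
    _ ≤ C * ENNReal.ofReal (M ^ p) + ENNReal.ofReal (2 / (β - 1 - p)) * ENNReal.ofReal (M ^ p) :=
        add_le_add hinside houtside
    _ = _ := (add_mul _ _ _).symm

lemma exists_lintegral_truncatedKernel_mul_powerWeight_le {β a p : ℝ} (hβ : 1 < β)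
    (ha : -1 < a) (hp : -β ≤ p) (hp' : p < β - 1) :
    ∃ C ≠ ∞, ∀ x, ∫⁻ y, ENNReal.ofReal (truncatedKernel β (x - y) * powerWeight a p y) ≤
      C * ENNReal.ofReal (max 1 |x| ^ p) := by
  obtain ⟨C, hC, hfar⟩ := exists_lintegral_max_rpow_neg_mul_powerWeight_le hβ ha hp hp'
  have hκ := lintegral_truncatedKernel_ne_top hβ
  refine ⟨ENNReal.ofReal (2 ^ |p|) * (∫⁻ z, ENNReal.ofReal (truncatedKernel β z)) +
    ENNReal.ofReal (4 ^ β) * C, by finiteness, fun x => ?_⟩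
  set M := max 1 |x|
  have hM : 1 ≤ M := le_max_left 1 |x|
  have hnear : ∀ y ∈ {y : ℝ | 1 < |y| ∧ |x - y| ≤ M / 2},
      ENNReal.ofReal (truncatedKernel β (x - y) * powerWeight a p y) ≤
        ENNReal.ofReal (2 ^ |p| * M ^ p) * ENNReal.ofReal (truncatedKernel β (x - y)) := by
    rintro y ⟨hy, hxy⟩
    obtain ⟨h₁, h₂⟩ := abs_le_two_mul_and_le_two_mul_abs_of_near hy hxy
    rw [← ENNReal.ofReal_mul (by positivity), powerWeight_of_one_le_abs hy.le, mul_comm]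
    exact ENNReal.ofReal_le_ofReal (mul_le_mul_of_nonneg_right
      (rpow_le_two_rpow_abs_mul p (by linarith) h₁ h₂) (truncatedKernel_nonneg _ _))
  have hfar' : ∀ y ∈ {y : ℝ | max M |y| ≤ 4 * max 1 |x - y|},
      ENNReal.ofReal (truncatedKernel β (x - y) * powerWeight a p y) ≤
        ENNReal.ofReal (4 ^ β) * ENNReal.ofReal (max M |y| ^ (-β) * powerWeight a p y) := by
    intro y hy
    have hm : 0 < max M |y| := zero_lt_one.trans_le (hM.trans (le_max_left _ _))
    rw [← ENNReal.ofReal_mul (by positivity), ← mul_assoc]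
    refine ENNReal.ofReal_le_ofReal (mul_le_mul_of_nonneg_right ?_ (powerWeight_nonneg a p y))
    calc truncatedKernel β (x - y) ≤ (max M |y| / 4) ^ (-β) :=
          truncatedKernel_le_rpow_neg (by linarith) (by positivity) (by linarith [hy.out])
      _ = 4 ^ β * max M |y| ^ (-β) := by
          rw [rpow_neg (by positivity), div_rpow hm.le (by norm_num), rpow_neg hm.le, inv_div,
            div_eq_mul_inv]
  calc ∫⁻ y, ENNReal.ofReal (truncatedKernel β (x - y) * powerWeight a p y)
      = ∫⁻ y in univ, ENNReal.ofReal (truncatedKernel β (x - y) * powerWeight a p y) :=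
        (setLIntegral_univ _).symm
    _ ≤ _ := setLIntegral_le_add_of_subset_union _ fun y _ =>
        near_diagonal_or_max_le_four_mul x y
    _ ≤ (∫⁻ y in {y : ℝ | 1 < |y| ∧ |x - y| ≤ M / 2},
          ENNReal.ofReal (2 ^ |p| * M ^ p) * ENNReal.ofReal (truncatedKernel β (x - y))) +
        ∫⁻ y in {y : ℝ | max M |y| ≤ 4 * max 1 |x - y|},
          ENNReal.ofReal (4 ^ β) * ENNReal.ofReal (max M |y| ^ (-β) * powerWeight a p y) :=
        add_le_add (setLIntegral_mono (by fun_prop) hnear) (setLIntegral_mono (by fun_prop) hfar')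
    _ ≤ ENNReal.ofReal (2 ^ |p| * M ^ p) * (∫⁻ z, ENNReal.ofReal (truncatedKernel β z)) +
        ENNReal.ofReal (4 ^ β) * (C * ENNReal.ofReal (M ^ p)) := by
        rw [lintegral_const_mul' _ _ ENNReal.ofReal_ne_top,
          lintegral_const_mul' _ _ ENNReal.ofReal_ne_top]
        exact add_le_add
          (mul_le_mul_right ((setLIntegral_le_lintegral _ _).trans_eq
            (lintegral_sub_left_eq_self (fun z => ENNReal.ofReal (truncatedKernel β z)) x)) _)
          (mul_le_mul_right ((setLIntegral_le_lintegral _ _).trans (hfar M hM)) _)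
    _ = _ := by
        rw [ENNReal.ofReal_mul (by positivity)]
        ring

/-- one-dimensional core estimate behind Lemma A.2: under
`-2/α < γ₀`, `-2 < γ₁ - γ₀ ≤ 2 + 2/α`, one has
`∫_ℝ (1 ∧ |x¹-y¹|^{-1-α}) |y¹|^{γ₀α/2} (1+|y¹|^{α/2})^{-γ₁} dy¹
  ≤ C (1+|x¹|^{α/2})^{γ₀-γ₁}`. -/
theorem stmt3 (α γ0 γ1 : ℝ) (hα : α ∈ Set.Ioo (0 : ℝ) 2)
    (h0 : -2 / α < γ0) (h1 : -2 < γ1 - γ0) (h2 : γ1 - γ0 ≤ 2 + 2 / α) :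
    ∃ C : ℝ, 0 < C ∧
      ∀ x1 : ℝ,
        (∫⁻ y1 : ℝ,
            ENNReal.ofReal (min 1 (1 / |x1 - y1| ^ ((1 : ℝ) + α)) *
              (|y1| ^ (γ0 * α / 2) / (1 + |y1| ^ (α / 2)) ^ γ1)))
          ≤ ENNReal.ofReal (C * (1 + |x1| ^ (α / 2)) ^ (γ0 - γ1)) := by
  have hα₀ : 0 < α := hα.1
  have ha : -1 < γ0 * α / 2 := by linarith [(div_lt_iff₀ hα₀).mp h0]
  have hp : -(1 + α) ≤ γ0 * α / 2 - γ1 * (α / 2) := by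
    have := mul_le_mul_of_nonneg_right h2 hα₀.le
    rw [add_mul, div_mul_cancel₀ _ hα₀.ne'] at this
    linarith
  have hp' : γ0 * α / 2 - γ1 * (α / 2) < 1 + α - 1 := by nlinarith
  obtain ⟨C, hC, hbound⟩ :=
    exists_lintegral_truncatedKernel_mul_powerWeight_le (by linarith) ha hp hp'
  obtain ⟨c, hc, hcC⟩ := exists_pos_mul_ofReal_le hC
  refine ⟨2 ^ |γ1| * c * 2 ^ |γ0 - γ1|, by positivity, fun x => ?_⟩
  have hrhs := max_one_rpow_le_one_add_rpow (rpow_nonneg (abs_nonneg x) (α / 2)) (γ0 - γ1)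
  rw [← max_one_rpow_mul (abs_nonneg x) (by positivity),
    show α / 2 * (γ0 - γ1) = γ0 * α / 2 - γ1 * (α / 2) by ring] at hrhs
  calc _ ≤ ∫⁻ y, ENNReal.ofReal (2 ^ |γ1|) * ENNReal.ofReal (truncatedKernel (1 + α) (x - y) *
          powerWeight (γ0 * α / 2) (γ0 * α / 2 - γ1 * (α / 2)) y) := lintegral_mono fun y => by
        rw [← ENNReal.ofReal_mul (by positivity), mul_left_comm]
        exact ENNReal.ofReal_le_ofReal (mul_le_mul_of_nonneg_left
          (rpow_div_one_add_rpow_le_powerWeight (by positivity) _ _ _) (truncatedKernel_nonneg _ _))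
    _ ≤ ENNReal.ofReal (2 ^ |γ1|) *
          ENNReal.ofReal (c * max 1 |x| ^ (γ0 * α / 2 - γ1 * (α / 2))) := by
        rw [lintegral_const_mul' _ _ ENNReal.ofReal_ne_top]
        exact mul_le_mul_right ((hbound x).trans (hcC _)) _
    _ ≤ _ := by
        rw [← ENNReal.ofReal_mul (by positivity)]
        refine ENNReal.ofReal_le_ofReal ?_
        calc 2 ^ |γ1| * (c * max 1 |x| ^ (γ0 * α / 2 - γ1 * (α / 2)))
            ≤ 2 ^ |γ1| * (c * (2 ^ |γ0 - γ1| * (1 + |x| ^ (α / 2)) ^ (γ0 - γ1))) := by gcongr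
          _ = _ := by ring
end

section
/- Let $D=\mathbb{R}^d_+$ be the upper half-space ($x^1>0$), $d\geq 2$, $y\in D$, $r,\rho,\kappa_1>0$ with $r\leq c\rho$, and $-1<\kappa_0\leq 0$. Then $\int_{\{x\in D:\,|x-y|>\rho,\ x^1\leq r\}} \frac{(x^1)^{\kappa_0}}{|x-y|^{d+\kappa_1}}\,dx \leq C\,\rho^{-\kappa_1}r^{\kappa_0}$, where $C=C(d,\kappa_0,\kappa_1,c)$. -/
open MeasureTheory Real Set
open scoped ENNReal

/-!
Cut the region into dyadic cells on which `x¹ ∈ (a, 2a]` and `|x - y| ∈ [b, 2b)`, with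
`a = r 2^{-j-1}` and `b = ρ 2^k`. On such a cell the integrand is at most `a^κ₀ b^{-d-κ₁}`
(as `κ₀ ≤ 0`), and the cell lies in a box of volume `a (4b)^{d-1}`, so it contributes at
most `4^{d-1} a^{1+κ₀} b^{-1-κ₁}`. Summing over `j` and `k` gives two geometric series, convergent
because `κ₀, κ₁ > -1`, with total `≲ r^{1+κ₀} ρ^{-1-κ₁} = (r/ρ) r^{κ₀} ρ^{-κ₁} ≤ c ρ^{-κ₁} r^{κ₀}`.
-/

theorem EuclideanSpace.volume_setOf_forall_mem {ι : Type*} [Fintype ι] (s : ι → Set ℝ) :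
    volume {x : EuclideanSpace ℝ ι | ∀ i, x i ∈ s i} = ∏ i, volume (s i) := by
  have h : {x : EuclideanSpace ℝ ι | ∀ i, x i ∈ s i}
      = (MeasurableEquiv.toLp 2 (ι → ℝ)).symm ⁻¹' univ.pi s := by
    ext x; simp [Set.mem_pi]
  rw [h, (EuclideanSpace.volume_preserving_symm_measurableEquiv_toLp ι).measure_preimage_equiv,
    volume_pi_pi]

theorem volume_setOf_mem_Ioc_norm_sub_lt_le {d : ℕ} (i : Fin d) (y : EuclideanSpace ℝ (Fin d))
    (a a' R : ℝ) :
    volume {x : EuclideanSpace ℝ (Fin d) | x i ∈ Ioc a a' ∧ ‖x - y‖ < R}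
      ≤ ENNReal.ofReal (a' - a) * ENNReal.ofReal (2 * R) ^ (d - 1) := by
  set box := Function.update (fun j => Icc (y j - R) (y j + R)) i (Ioc a a')
  have hsub : {x : EuclideanSpace ℝ (Fin d) | x i ∈ Ioc a a' ∧ ‖x - y‖ < R}
      ⊆ {x | ∀ j, x j ∈ box j} := by
    rintro x ⟨hxi, hxy⟩ j
    rcases eq_or_ne j i with rfl | hj
    · simpa [box] using hxi
    · have := (PiLp.norm_apply_le (x - y) j).trans hxy.le
      rw [PiLp.sub_apply, Real.norm_eq_abs, abs_le] at this
      simp only [box, Function.update_of_ne hj, mem_Icc]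
      constructor <;> linarith
  calc _ ≤ volume {x : EuclideanSpace ℝ (Fin d) | ∀ j, x j ∈ box j} := measure_mono hsub
    _ = _ := by
      rw [EuclideanSpace.volume_setOf_forall_mem, Fintype.prod_eq_mul_prod_compl i]
      have hbox : ∀ j ∈ ({i}ᶜ : Finset (Fin d)), volume (box j) = ENNReal.ofReal (2 * R) := by
        intro j hj
        rw [Finset.mem_compl, Finset.mem_singleton] at hj
        simp only [box, Function.update_of_ne hj, Real.volume_Icc]
        ring_nf
      rw [Finset.prod_congr rfl hbox, Finset.prod_const, Finset.card_compl, Finset.card_singleton,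
        Fintype.card_fin]
      simp [box, Real.volume_Ioc]

theorem ENNReal.tsum_ofReal_mul_mul {α β : Type*} {M : ℝ} {u : α → ℝ} {v : β → ℝ} (hM : 0 ≤ M)
    (hu : ∀ a, 0 ≤ u a) :
    ∑' p : α × β, ENNReal.ofReal (M * u p.1 * v p.2)
      = ENNReal.ofReal M * ((∑' a, ENNReal.ofReal (u a)) * ∑' b, ENNReal.ofReal (v b)) := by
  simp_rw [ENNReal.ofReal_mul (mul_nonneg hM (hu _)), ENNReal.ofReal_mul hM, mul_assoc,
    ENNReal.tsum_mul_left]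
  rw [ENNReal.tsum_prod (f := fun a b => ENNReal.ofReal (u a) * ENNReal.ofReal (v b))]
  simp_rw [ENNReal.tsum_mul_left, ENNReal.tsum_mul_right]

theorem tsum_ofReal_mul_pow_rpow {a t s : ℝ} (ha : 0 ≤ a) (ht : 0 ≤ t) (hts : t ^ s < 1) :
    ∑' k : ℕ, ENNReal.ofReal ((a * t ^ k) ^ s) = ENNReal.ofReal (a ^ s / (1 - t ^ s)) := by
  have hq : 0 ≤ t ^ s := by positivity
  simp_rw [Real.mul_rpow ha (pow_nonneg ht _), ← Real.rpow_pow_comm ht]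
  rw [← ENNReal.ofReal_tsum_of_nonneg (fun k => by positivity)
      ((summable_geometric_of_lt_one hq hts).mul_left _),
    tsum_mul_left, tsum_geometric_of_lt_one hq hts, div_eq_mul_inv]

theorem rpow_one_add_mul_rpow_neg_one_add_le {r ρ c s t : ℝ} (hr : 0 < r) (hρ : 0 < ρ)
    (hrρ : r ≤ c * ρ) : r ^ (1 + s) * ρ ^ (-(1 + t)) ≤ c * ρ ^ (-t) * r ^ s := by
  have hrρ' : r * ρ⁻¹ ≤ c := by rwa [← div_eq_mul_inv, div_le_iff₀ hρ]
  calc r ^ (1 + s) * ρ ^ (-(1 + t)) = r * ρ⁻¹ * (ρ ^ (-t) * r ^ s) := by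
        rw [Real.rpow_add hr, Real.rpow_one, neg_add, Real.rpow_add hρ, Real.rpow_neg_one]
        ring
    _ ≤ c * (ρ ^ (-t) * r ^ s) := by gcongr
    _ = c * ρ ^ (-t) * r ^ s := by ring

theorem rpow_mul_pow_div_rpow_eq {d : ℕ} {a b κ0 κ1 : ℝ} (ha : 0 < a) (hb : 0 < b) (hd : 1 ≤ d) :
    a ^ κ0 / b ^ ((d : ℝ) + κ1) * (a * (4 * b) ^ (d - 1))
      = 4 ^ (d - 1) * a ^ (1 + κ0) * b ^ (-(1 + κ1)) := by
  have hb' : b ^ (d - 1) / b ^ ((d : ℝ) + κ1) = b ^ (-(1 + κ1)) := by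
    rw [← Real.rpow_natCast, ← Real.rpow_sub hb, Nat.cast_sub hd, Nat.cast_one]
    ring_nf
  rw [Real.rpow_add ha, Real.rpow_one, mul_pow, ← hb']
  ring

section DyadicCell

variable {d : ℕ} (i : Fin d) (y : EuclideanSpace ℝ (Fin d))

def dyadicCell (a b : ℝ) : Set (EuclideanSpace ℝ (Fin d)) :=
  {x | x i ∈ Ioc a (2 * a) ∧ ‖x - y‖ ∈ Ico b (2 * b)}

theorem setLIntegral_dyadicCell_le {κ0 κ1 a b : ℝ} (hκ0 : κ0 ≤ 0) (hκ1 : 0 ≤ (d : ℝ) + κ1)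
    (ha : 0 < a) (hb : 0 < b) :
    ∫⁻ x in dyadicCell i y a b, ENNReal.ofReal (x i ^ κ0 / ‖x - y‖ ^ ((d : ℝ) + κ1))
      ≤ ENNReal.ofReal (4 ^ (d - 1) * a ^ (1 + κ0) * b ^ (-(1 + κ1))) := by
  set K := a ^ κ0 / b ^ ((d : ℝ) + κ1)
  have hK : 0 ≤ K := by positivity
  have hbound : ∀ x ∈ dyadicCell i y a b,
      ENNReal.ofReal (x i ^ κ0 / ‖x - y‖ ^ ((d : ℝ) + κ1)) ≤ ENNReal.ofReal K := by
    rintro x ⟨⟨hxa, -⟩, hxb, -⟩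
    exact ENNReal.ofReal_le_ofReal (div_le_div₀ (by positivity)
      (Real.rpow_le_rpow_of_nonpos ha hxa.le hκ0) (by positivity) (Real.rpow_le_rpow hb.le hxb hκ1))
  have hvol :
      volume (dyadicCell i y a b) ≤ ENNReal.ofReal a * ENNReal.ofReal (4 * b) ^ (d - 1) := by
    have hsub : dyadicCell i y a b ⊆ {x | x i ∈ Ioc a (2 * a) ∧ ‖x - y‖ < 2 * b} :=
      fun x hx => ⟨hx.1, hx.2.2⟩
    refine (measure_mono hsub).trans
      ((volume_setOf_mem_Ioc_norm_sub_lt_le i y a (2 * a) (2 * b)).trans_eq ?_)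
    ring_nf
  calc _ ≤ ∫⁻ _ in dyadicCell i y a b, ENNReal.ofReal K :=
        setLIntegral_mono measurable_const hbound
    _ = ENNReal.ofReal K * volume (dyadicCell i y a b) := setLIntegral_const _ _
    _ ≤ ENNReal.ofReal K * (ENNReal.ofReal a * ENNReal.ofReal (4 * b) ^ (d - 1)) := by gcongr
    _ = _ := by
      rw [← ENNReal.ofReal_pow (by positivity), ← ENNReal.ofReal_mul ha.le,
        ← ENNReal.ofReal_mul hK, rpow_mul_pow_div_rpow_eq ha hb i.pos]

theorem subset_iUnion_dyadicCell {r ρ : ℝ} (hr : 0 < r) (hρ : 0 < ρ) :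
    {x : EuclideanSpace ℝ (Fin d) | 0 < x i ∧ ρ < ‖x - y‖ ∧ x i ≤ r}
      ⊆ ⋃ p : ℕ × ℕ, dyadicCell i y (r / 2 * (1 / 2) ^ p.1) (ρ * 2 ^ p.2) := by
  rintro x ⟨hx0, hxρ, hxr⟩
  obtain ⟨j, hj⟩ := exists_nat_pow_near_of_lt_one (div_pos hx0 hr) ((div_le_one hr).2 hxr)
    one_half_pos one_half_lt_one
  obtain ⟨k, hk⟩ := exists_nat_pow_near ((one_le_div hρ).2 hxρ.le) one_lt_two
  refine mem_iUnion.2 ⟨(j, k), ⟨?_, ?_⟩, ?_, ?_⟩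
  · rw [lt_div_iff₀ hr, pow_succ] at hj
    linarith [hj.1]
  · rw [div_le_iff₀ hr] at hj
    linarith [hj.2]
  · rw [le_div_iff₀ hρ] at hk
    linarith [hk.1]
  · rw [div_lt_iff₀ hρ, pow_succ] at hk
    linarith [hk.2]

theorem setLIntegral_boundaryLayer_le {κ0 κ1 r ρ : ℝ} (hκ0 : -1 < κ0) (hκ0' : κ0 ≤ 0)
    (hκ1 : -1 < κ1) (hr : 0 < r) (hρ : 0 < ρ) :
    ∫⁻ x in {x : EuclideanSpace ℝ (Fin d) | 0 < x i ∧ ρ < ‖x - y‖ ∧ x i ≤ r},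
        ENNReal.ofReal (x i ^ κ0 / ‖x - y‖ ^ ((d : ℝ) + κ1))
      ≤ ENNReal.ofReal (4 ^ (d - 1) * ((r / 2) ^ (1 + κ0) / (1 - (1 / 2) ^ (1 + κ0))
          * (ρ ^ (-(1 + κ1)) / (1 - 2 ^ (-(1 + κ1)))))) := by
  have hd : (1 : ℝ) ≤ d := by exact_mod_cast i.pos
  have hq0 : (1 / 2 : ℝ) ^ (1 + κ0) < 1 :=
    Real.rpow_lt_one (by norm_num) one_half_lt_one (by linarith)
  have hq1 : (2 : ℝ) ^ (-(1 + κ1)) < 1 :=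
    Real.rpow_lt_one_of_one_lt_of_neg one_lt_two (by linarith)
  have hcell (p : ℕ × ℕ) := setLIntegral_dyadicCell_le i y hκ0' (by linarith : 0 ≤ (d : ℝ) + κ1)
    (by positivity : 0 < r / 2 * (1 / 2) ^ p.1) (by positivity : 0 < ρ * 2 ^ p.2)
  calc _ ≤ ∫⁻ x in ⋃ p : ℕ × ℕ, dyadicCell i y (r / 2 * (1 / 2) ^ p.1) (ρ * 2 ^ p.2),
          ENNReal.ofReal (x i ^ κ0 / ‖x - y‖ ^ ((d : ℝ) + κ1)) :=
        lintegral_mono_set (subset_iUnion_dyadicCell i y hr hρ)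
    _ ≤ ∑' p : ℕ × ℕ, ENNReal.ofReal (4 ^ (d - 1) * (r / 2 * (1 / 2) ^ p.1) ^ (1 + κ0)
          * (ρ * 2 ^ p.2) ^ (-(1 + κ1))) :=
        (lintegral_iUnion_le _ _).trans (ENNReal.tsum_le_tsum hcell)
    _ = _ := by
      rw [ENNReal.tsum_ofReal_mul_mul (u := fun j : ℕ => (r / 2 * (1 / 2) ^ j) ^ (1 + κ0))
          (v := fun k : ℕ => (ρ * 2 ^ k) ^ (-(1 + κ1))) (by positivity) (fun _ => by positivity),
        tsum_ofReal_mul_pow_rpow (by positivity) (by norm_num) hq0,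
        tsum_ofReal_mul_pow_rpow hρ.le zero_le_two hq1,
        ← ENNReal.ofReal_mul (div_nonneg (by positivity) (sub_nonneg.2 hq0.le)),
        ← ENNReal.ofReal_mul (by positivity)]

end DyadicCell

/-- Lemma A.4(ii) on the half space `ℝ^d_+ = {x¹ > 0}`, `d ≥ 2`:
for `y ∈ ℝ^d_+`, `r ≤ cρ`, `-1 < κ₀ ≤ 0 < κ₁`,
`∫_{{x ∈ ℝ^d_+ : |x-y| > ρ, x¹ ≤ r}} (x¹)^{κ₀} |x-y|^{-d-κ₁} dx ≤ C ρ^{-κ₁} r^{κ₀}`. -/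
theorem stmt5 (d : ℕ) (hd : 2 ≤ d) (κ0 κ1 c : ℝ)
    (hκ0 : κ0 ∈ Set.Ioc (-1 : ℝ) 0) (hκ1 : 0 < κ1) (hc : 0 < c) :
    ∃ C : ℝ, 0 < C ∧
      ∀ y : EuclideanSpace ℝ (Fin d), 0 < y ⟨0, by omega⟩ →
        ∀ r ρ : ℝ, 0 < r → 0 < ρ → r ≤ c * ρ →
          (∫⁻ x in {x : EuclideanSpace ℝ (Fin d) |
                0 < x ⟨0, by omega⟩ ∧ ρ < ‖x - y‖ ∧ x ⟨0, by omega⟩ ≤ r},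
              ENNReal.ofReal ((x ⟨0, by omega⟩) ^ κ0 / ‖x - y‖ ^ ((d : ℝ) + κ1)))
            ≤ ENNReal.ofReal (C * ρ ^ (-κ1) * r ^ κ0) := by
  have hq0 : 0 < 1 - (1 / 2 : ℝ) ^ (1 + κ0) :=
    sub_pos.2 (Real.rpow_lt_one (by norm_num) one_half_lt_one (by linarith [hκ0.1]))
  have hq1 : 0 < 1 - (2 : ℝ) ^ (-(1 + κ1)) :=
    sub_pos.2 (Real.rpow_lt_one_of_one_lt_of_neg one_lt_two (by linarith))
  set A : ℝ := 4 ^ (d - 1) / ((1 - (1 / 2) ^ (1 + κ0)) * (1 - 2 ^ (-(1 + κ1))))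
  have hA : 0 < A := div_pos (by positivity) (mul_pos hq0 hq1)
  refine ⟨A * c, by positivity, fun y _ r ρ hr hρ hrρ =>
    (setLIntegral_boundaryLayer_le _ y hκ0.1 hκ0.2 (by linarith) hr hρ).trans
      (ENNReal.ofReal_le_ofReal ?_)⟩
  calc _ = A * ((r / 2) ^ (1 + κ0) * ρ ^ (-(1 + κ1))) := by
        simp only [A]; field_simp
    _ ≤ A * (r ^ (1 + κ0) * ρ ^ (-(1 + κ1))) := by
        gcongr
        · linarith [hκ0.1]
        · linarith
    _ ≤ A * (c * ρ ^ (-κ1) * r ^ κ0) :=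
        mul_le_mul_of_nonneg_left (rpow_one_add_mul_rpow_neg_one_add_le hr hρ hrρ) hA.le
    _ = A * c * ρ ^ (-κ1) * r ^ κ0 := by ring
end
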